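/- arXiv:2307.05218 — 2 statements merged into one kernel-verified Lean document; each statement's English description precedes it below -/
import Mathlib

section
/- If R is a preorder on processes, then the lifting R̂ of R to probability distributions is a preorder on distributions. -/
open BigOperators Finsupp

/-- Finitely supported (sub)distributions on `α`. -/
abbrev PDist (α : Type) := α →₀ NNReal

/-- Point distribution. -/
noncomputable def delta {α : Type} (a : α) : PDist α := Finsupp.single a 1

/-- Lifting of a relation on processes to probability distributions:
`(Δ, Θ) ∈ R̂` iff `Δ = Σ_i p_i·δ(P_i)`, `Θ = Σ_i p_i·δ(Q_i)` for a finite index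
set with `Σ p_i = 1` and `R (P i) (Q i)` for all `i`. -/
def Lift {α : Type} (R : α → α → Prop) (Δ Θ : PDist α) : Prop :=
  ∃ (n : ℕ) (p : Fin n → NNReal) (P Q : Fin n → α),
    (∑ i, p i) = 1 ∧
    Δ = ∑ i, p i • delta (P i) ∧
    Θ = ∑ i, p i • delta (Q i) ∧
    ∀ i, R (P i) (Q i)

open scoped Classical

lemma sum_smul_delta_apply {α : Type} {n : ℕ} (p : Fin n → NNReal) (P : Fin n → α) (a : α) :
    (∑ i, p i • delta (P i)) a = ∑ i, if P i = a then p i else 0 := by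
  rw [Finsupp.finset_sum_apply]
  refine Finset.sum_congr rfl fun i _ => ?_
  simp [delta, Finsupp.single_apply, mul_ite]

/-- If `R` is a preorder (reflexive and transitive) on processes, then the
lifting `R̂` to probability distributions is a preorder on distributions
(reflexive on probability distributions, i.e. those of total mass 1, and
transitive). -/
theorem lift_preorder {α : Type} (R : α → α → Prop)
    (hrefl : Reflexive R) (htrans : Transitive R) :
    (∀ Δ : PDist α, (Δ.sum fun _ v => v) = 1 → Lift R Δ Δ) ∧
    Transitive (Lift R) := by
  constructor
  · intro Δ hΔ
    set e := Δ.support.equivFin.symm with he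
    have key : Δ = ∑ i : Fin Δ.support.card, Δ (e i) • delta ((e i : α)) := by
      have : ∑ i : Fin Δ.support.card, Δ (e i) • delta ((e i : α)) =
          ∑ x : Δ.support, Δ x • delta (x : α) :=
        Equiv.sum_comp e (fun x : Δ.support => Δ x • delta (x : α))
      rw [this, Finset.sum_coe_sort Δ.support (fun a => Δ a • delta a)]
      have : ∀ a ∈ Δ.support, Δ a • delta a = Finsupp.single a (Δ a) := by
        intro a _; simp [delta, Finsupp.smul_single, smul_eq_mul]
      rw [Finset.sum_congr rfl this]
      exact (Finsupp.sum_single Δ).symm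
    refine ⟨Δ.support.card, fun i => Δ (e i), fun i => (e i : α), fun i => (e i : α), ?_,
      key, key, fun i => hrefl _⟩
    have : ∑ i : Fin Δ.support.card, Δ (e i) = ∑ x : Δ.support, Δ x :=
      Equiv.sum_comp e (fun x : Δ.support => Δ x)
    rw [this, Finset.sum_coe_sort Δ.support (fun a => Δ a)]
    exact hΔ
  · rintro Δ Θ Ξ ⟨n, p, P, Q, hp, hΔ, hΘ, hPQ⟩ ⟨m, q, S, T, hq, hΘ', hΞ, hST⟩
    set w : Fin n × Fin m → NNReal :=
      fun ij => if Q ij.1 = S ij.2 then p ij.1 * q ij.2 / Θ (Q ij.1) else 0 with hw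
    set P' : Fin n × Fin m → α := fun ij => P ij.1 with hP'
    set T' : Fin n × Fin m → α := fun ij => if Q ij.1 = S ij.2 then T ij.2 else P ij.1 with hT'
    have factQ : ∀ a, Θ a = ∑ k, if Q k = a then p k else 0 := by
      intro a; rw [hΘ]; exact sum_smul_delta_apply p Q a
    have factS : ∀ a, Θ a = ∑ j, if S j = a then q j else 0 := by
      intro a; rw [hΘ']; exact sum_smul_delta_apply q S a
    have hp0 : ∀ i, Θ (Q i) = 0 → p i = 0 := by
      intro i h
      rw [factQ (Q i)] at h
      have := (Finset.sum_eq_zero_iff.mp h) i (Finset.mem_univ i)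
      simpa using this
    have hq0 : ∀ j, Θ (S j) = 0 → q j = 0 := by
      intro j h
      rw [factS (S j)] at h
      have := (Finset.sum_eq_zero_iff.mp h) j (Finset.mem_univ j)
      simpa using this
    have lemA : ∀ i, ∑ j, w (i, j) = p i := by
      intro i
      by_cases h : Θ (Q i) = 0
      · rw [hp0 i h]
        refine Finset.sum_eq_zero fun j _ => ?_
        simp [hw, hp0 i h]
      · have : ∀ j, w (i, j) = (if S j = Q i then q j else 0) * (p i / Θ (Q i)) := by
          intro j
          simp only [hw]
          rcases eq_or_ne (Q i) (S j) with hqs | hqs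
          · simp [hqs, eq_comm, div_eq_mul_inv]; ring
          · simp [hqs, Ne.symm hqs]
        rw [Finset.sum_congr rfl (fun j _ => this j), ← Finset.sum_mul, ← factS (Q i)]
        rw [mul_div_assoc']
        rw [mul_comm, mul_div_assoc, div_self h, mul_one]
    have lemB : ∀ j, ∑ i, w (i, j) = q j := by
      intro j
      by_cases h : Θ (S j) = 0
      · rw [hq0 j h]
        refine Finset.sum_eq_zero fun i _ => ?_
        simp only [hw]
        rcases eq_or_ne (Q i) (S j) with hqs | hqs
        · simp [hqs, hq0 j h]
        · simp [hqs]
      · have : ∀ i, w (i, j) = (if Q i = S j then p i else 0) * (q j / Θ (S j)) := by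
          intro i
          simp only [hw]
          rcases eq_or_ne (Q i) (S j) with hqs | hqs
          · simp [hqs, div_eq_mul_inv]; ring
          · simp [hqs]
        rw [Finset.sum_congr rfl (fun i _ => this i), ← Finset.sum_mul, ← factQ (S j), mul_comm]
        exact div_mul_cancel₀ (q j) h
    refine ⟨n * m, w ∘ finProdFinEquiv.symm, P' ∘ finProdFinEquiv.symm,
      T' ∘ finProdFinEquiv.symm, ?_, ?_, ?_, ?_⟩
    · rw [show (∑ k, (w ∘ finProdFinEquiv.symm) k) = ∑ ij, w ij from
        Equiv.sum_comp finProdFinEquiv.symm w]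
      rw [Fintype.sum_prod_type, ← hp]
      exact Finset.sum_congr rfl fun i _ => lemA i
    · rw [show (∑ k, (w ∘ finProdFinEquiv.symm) k • delta ((P' ∘ finProdFinEquiv.symm) k)) =
        ∑ ij, w ij • delta (P' ij) from
        Equiv.sum_comp finProdFinEquiv.symm (fun ij => w ij • delta (P' ij))]
      rw [Fintype.sum_prod_type, hΔ]
      refine Finset.sum_congr rfl fun i _ => ?_
      rw [show (∑ j, w (i, j) • delta (P' (i, j))) = (∑ j, w (i, j)) • delta (P i) by
        rw [Finset.sum_smul]]
      rw [lemA i]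
    · rw [show (∑ k, (w ∘ finProdFinEquiv.symm) k • delta ((T' ∘ finProdFinEquiv.symm) k)) =
        ∑ ij, w ij • delta (T' ij) from
        Equiv.sum_comp finProdFinEquiv.symm (fun ij => w ij • delta (T' ij))]
      rw [Fintype.sum_prod_type_right, hΞ]
      refine Finset.sum_congr rfl fun j _ => ?_
      have : ∀ i, w (i, j) • delta (T' (i, j)) = w (i, j) • delta (T j) := by
        intro i
        rcases eq_or_ne (Q i) (S j) with hqs | hqs
        · simp [hT', hqs]
        · simp [hw, hT', hqs]
      rw [Finset.sum_congr rfl (fun i _ => this i), ← Finset.sum_smul, lemB j]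
    · intro k
      rcases eq_or_ne (Q (finProdFinEquiv.symm k).1) (S (finProdFinEquiv.symm k).2) with hqs | hqs
      · simp only [Function.comp_apply, hP', hT', if_pos hqs]
        exact htrans (hPQ _) (hqs ▸ hST _)
      · simp only [Function.comp_apply, hP', hT', if_neg hqs]
        exact hrefl _
end

section
/- If a preorder R on processes is a probabilistic bisimulation, then its lifting R̂ to distributions is a probabilistic bisimulation on distributions (i.e., for each (Δ, Θ) ∈ R̂, Δ ⟹ Δ' implies Θ ⟹ Θ' with (Δ', Θ') ∈ R̂, and symmetrically Θ ⟹ Θ' implies Δ ⟹ Δ' with (Δ', Θ') ∈ R̂). -/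
open BigOperators Finsupp

/-- One reduction step lifted to distributions (Definition of reductions of
distributions): `Δ ⟶ Θ` when `Δ = Σ_i p_i·δ(P_i)`, for each `i` either
`P_i ⟶ Θ_i` or `Θ_i = δ(P_i)`, some `i` makes a step, and `Θ = Σ_i p_i·Θ_i`. -/
def DStep {α : Type} (step : α → PDist α → Prop) (Δ Θ : PDist α) : Prop :=
  ∃ (n : ℕ) (p : Fin n → NNReal) (P : Fin n → α) (Θi : Fin n → PDist α),
    (∑ i, p i) = 1 ∧
    Δ = ∑ i, p i • delta (P i) ∧
    (∀ i, step (P i) (Θi i) ∨ Θi i = delta (P i)) ∧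
    (∃ i, step (P i) (Θi i)) ∧
    Θ = ∑ i, p i • Θi i

/-- Many-step reduction `⟹` on distributions. -/
def MStep {α : Type} (step : α → PDist α → Prop) : PDist α → PDist α → Prop :=
  Relation.ReflTransGen (DStep step)

/-- Probabilistic (reduction) bisimulation on processes. -/
def PBisim {α : Type} (step : α → PDist α → Prop) (R : α → α → Prop) : Prop :=
  ∀ P Q, R P Q →
    (∀ Δ, MStep step (delta P) Δ → ∃ Θ, MStep step (delta Q) Θ ∧ Lift R Δ Θ) ∧
    (∀ Θ, MStep step (delta Q) Θ → ∃ Δ, MStep step (delta P) Δ ∧ Lift R Δ Θ)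

/-- Probabilistic bisimulation on distributions. -/
def DBisim {α : Type} (step : α → PDist α → Prop)
    (S : PDist α → PDist α → Prop) : Prop :=
  ∀ Δ Θ, S Δ Θ →
    (∀ Δ', MStep step Δ Δ' → ∃ Θ', MStep step Θ Θ' ∧ S Δ' Θ') ∧
    (∀ Θ', MStep step Θ Θ' → ∃ Δ', MStep step Δ Δ' ∧ S Δ' Θ')

/-!
Write `Δ = Σ pᵢ·δ(Pᵢ)` and `Θ = Σ pᵢ·δ(Qᵢ)` with `Pᵢ R Qᵢ`. A reduction sequence `Δ ⟹ Δ'`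
splits into `Δ' = Σ pᵢ·Δ'ᵢ` with `δ(Pᵢ) ⟹ Δ'ᵢ`: each step is distributed over the atoms of the
current distribution, the reducts of all copies of one process being averaged. The bisimulation
matches every `δ(Pᵢ) ⟹ Δ'ᵢ` by some `δ(Qᵢ) ⟹ Θ'ᵢ` with `Δ'ᵢ R̂ Θ'ᵢ`, and these runs recombine
into `Θ ⟹ Σ pᵢ·Θ'ᵢ` by performing them one after the other, each inside the context of the
others. Both the splitting and the recombination need every reduct to be a full distribution
(a step only applies to distributions of total mass `1`); this follows from reflexivity of `R`,
since `P ⟶ θ` makes `θ` the left side of some `θ R̂ Θ'`.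
-/

variable {α : Type} {step : α → PDist α → Prop} {R : α → α → Prop}

namespace Finsupp

variable {σ S : Type*} [Semiring S]

lemma degree_smul (c : S) (f : σ →₀ S) : degree (c • f) = c * degree f := by
  rw [degree_eq_weight_one]
  exact map_smul (linearCombination S fun _ : σ => (1 : S)) c f

lemma degree_sum_smul {ι : Type*} (s : Finset ι) (p : ι → S) (f : ι → σ →₀ S)
    (hf : ∀ i ∈ s, degree (f i) = 1) : degree (∑ i ∈ s, p i • f i) = ∑ i ∈ s, p i := by
  rw [map_sum]
  exact Finset.sum_congr rfl fun i hi => by rw [degree_smul, hf i hi, mul_one]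

lemma degree_linearCombination {τ : Type*} {g : σ → τ →₀ S} (hg : ∀ a, degree (g a) = 1)
    (f : σ →₀ S) :
    degree (linearCombination S g f) = degree f := by
  rw [linearCombination_apply, Finsupp.sum, degree_sum_smul _ _ _ fun a _ => hg a,
    degree_apply]

end Finsupp

-- `Finsupp.degree Δ = Σₐ Δ a` is the total mass of `Δ`.
def MassPreserving (step : α → PDist α → Prop) : Prop :=
  ∀ P θ, step P θ → degree θ = 1

lemma degree_delta (a : α) : degree (delta a) = 1 :=
  degree_single a 1

lemma sum_support_smul_delta (Δ : PDist α) : ∑ a ∈ Δ.support, Δ a • delta a = Δ := by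
  simp only [delta, smul_single_one]
  exact sum_single Δ

lemma DStep.of_fintype {ι : Type*} [Fintype ι] (p : ι → NNReal) (P : ι → α)
    (Θi : ι → PDist α) {Δ Θ : PDist α} (hp : ∑ i, p i = 1)
    (hΔ : Δ = ∑ i, p i • delta (P i))
    (hstep : ∀ i, step (P i) (Θi i) ∨ Θi i = delta (P i))
    (hex : ∃ i, step (P i) (Θi i)) (hΘ : Θ = ∑ i, p i • Θi i) :
    DStep step Δ Θ := by
  let e := (Fintype.equivFin ι).symm
  obtain ⟨i, hi⟩ := hex
  exact ⟨_, p ∘ e, P ∘ e, Θi ∘ e, (e.sum_comp p).trans hp,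
    hΔ.trans (e.sum_comp fun i => p i • delta (P i)).symm, fun k => hstep (e k),
    ⟨e.symm i, by simpa⟩, hΘ.trans (e.sum_comp fun i => p i • Θi i).symm⟩

lemma DStep.of_step {P : α} {θ : PDist α} (h : step P θ) : DStep step (delta P) θ :=
  DStep.of_fintype (fun _ : Unit => 1) (fun _ => P) (fun _ => θ) (by simp) (by simp)
    (fun _ => Or.inl h) ⟨(), h⟩ (by simp)

lemma Lift.of_fintype {ι : Type*} [Fintype ι] (p : ι → NNReal) (P Q : ι → α)
    {Δ Θ : PDist α} (hp : ∑ i, p i = 1) (hΔ : Δ = ∑ i, p i • delta (P i))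
    (hΘ : Θ = ∑ i, p i • delta (Q i)) (hR : ∀ i, R (P i) (Q i)) :
    Lift R Δ Θ := by
  let e := (Fintype.equivFin ι).symm
  exact ⟨_, p ∘ e, P ∘ e, Q ∘ e, (e.sum_comp p).trans hp,
    hΔ.trans (e.sum_comp fun i => p i • delta (P i)).symm,
    hΘ.trans (e.sum_comp fun i => p i • delta (Q i)).symm, fun k => hR (e k)⟩

lemma Lift.degree_left {Δ Θ : PDist α} (h : Lift R Δ Θ) : degree Δ = 1 := by
  obtain ⟨n, p, P, Q, hp, rfl, -, -⟩ := h
  rw [degree_sum_smul _ _ _ fun i _ => degree_delta (P i), hp]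

lemma Lift.flip {Δ Θ : PDist α} (h : Lift R Δ Θ) : Lift (flip R) Θ Δ := by
  obtain ⟨n, p, P, Q, hp, hΔ, hΘ, hR⟩ := h
  exact ⟨n, p, Q, P, hp, hΘ, hΔ, hR⟩

lemma Lift.sum_smul {ι : Type*} [Fintype ι] (p : ι → NNReal) (Δi Θi : ι → PDist α)
    (hp : ∑ i, p i = 1) (h : ∀ i, Lift R (Δi i) (Θi i)) :
    Lift R (∑ i, p i • Δi i) (∑ i, p i • Θi i) := by
  choose m q P Q hq hΔ hΘ hR using h
  refine Lift.of_fintype (ι := Σ i, Fin (m i)) (fun x => p x.1 * q x.1 x.2)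
    (fun x => P x.1 x.2) (fun x => Q x.1 x.2) ?_ ?_ ?_ fun x => hR x.1 x.2 <;>
    simp only [← Finset.univ_sigma_univ, Finset.sum_sigma, ← smul_smul, ← Finset.mul_sum,
      ← Finset.smul_sum, hq, mul_one, hp, ← hΔ, ← hΘ]

lemma PBisim.massPreserving (hrefl : ∀ P, R P P) (hbis : PBisim step R) :
    MassPreserving step := fun P θ h =>
  have ⟨_, _, hlift⟩ := (hbis P P (hrefl P)).1 θ (.single (.of_step h))
  hlift.degree_left

lemma DStep.degree_eq_one (hm : MassPreserving step) {Δ Θ : PDist α}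
    (h : DStep step Δ Θ) : degree Θ = 1 := by
  obtain ⟨n, p, P, Θi, hp, -, hstep, -, rfl⟩ := h
  refine (degree_sum_smul _ _ _ fun i _ => ?_).trans hp
  rcases hstep i with hs | hs
  · exact hm _ _ hs
  · rw [hs, degree_delta]

lemma MStep.degree_eq_one (hm : MassPreserving step) {Δ Θ : PDist α}
    (h : MStep step Δ Θ) (hΔ : degree Δ = 1) : degree Θ = 1 := by
  induction h with
  | refl => exact hΔ
  | tail _ hd _ => exact hd.degree_eq_one hm

lemma DStep.smul_add {A A' : PDist α} (h : DStep step A A') {c : NNReal} {C : PDist α}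
    (hc : c + degree C = 1) : DStep step (c • A + C) (c • A' + C) := by
  obtain ⟨m, q, P, θ, hq, rfl, hstep, ⟨j, hj⟩, rfl⟩ := h
  refine DStep.of_fintype (ι := Fin m ⊕ C.support) (Sum.elim (fun j => c * q j) (fun a => C a))
    (Sum.elim P (↑)) (Sum.elim θ fun a => delta a) ?_ ?_ ?_ ⟨.inl j, hj⟩ ?_
  · rw [Fintype.sum_sum_type, ← hc, degree_apply]
    simp only [Sum.elim_inl, Sum.elim_inr, ← Finset.mul_sum, hq, mul_one,
      Finset.sum_coe_sort C.support C]
  · rw [Fintype.sum_sum_type]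
    simp only [Sum.elim_inl, Sum.elim_inr, Finset.smul_sum, smul_smul,
      Finset.sum_coe_sort C.support fun a => C a • delta a, sum_support_smul_delta]
  · rintro (j | a)
    · exact hstep j
    · exact .inr rfl
  · rw [Fintype.sum_sum_type]
    simp only [Sum.elim_inl, Sum.elim_inr, Finset.smul_sum, smul_smul,
      Finset.sum_coe_sort C.support fun a => C a • delta a, sum_support_smul_delta]

lemma MStep.smul_add {A A' : PDist α} (h : MStep step A A') {c : NNReal} {C : PDist α}
    (hc : c + degree C = 1) : MStep step (c • A + C) (c • A' + C) := by
  induction h with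
  | refl => exact .refl
  | tail _ hd ih => exact ih.tail (hd.smul_add hc)

lemma MStep.add_sum_smul (hm : MassPreserving step) {ι : Type*} (s : Finset ι)
    (p : ι → NNReal) (Δi Θi : ι → PDist α) (C : PDist α)
    (hp : degree C + ∑ i ∈ s, p i = 1) (hΔi : ∀ i ∈ s, degree (Δi i) = 1)
    (h : ∀ i ∈ s, MStep step (Δi i) (Θi i)) :
    MStep step (C + ∑ i ∈ s, p i • Δi i) (C + ∑ i ∈ s, p i • Θi i) := by
  classical
  induction s using Finset.induction_on generalizing C with
  | empty => exact .refl
  | insert k s hk ih =>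
    simp only [Finset.sum_insert hk, Finset.mem_insert, forall_eq_or_imp] at hp hΔi h ⊢
    have hΘi : ∀ i ∈ s, degree (Θi i) = 1 := fun i hi => (h.2 i hi).degree_eq_one hm (hΔi.2 i hi)
    have hrest : MStep step ((C + p k • Δi k) + ∑ i ∈ s, p i • Δi i)
        ((C + p k • Δi k) + ∑ i ∈ s, p i • Θi i) :=
      ih _ (by rw [map_add, degree_smul, hΔi.1, mul_one, ← hp]; ring) hΔi.2 h.2
    have hfirst : MStep step (p k • Δi k + (C + ∑ i ∈ s, p i • Θi i))
        (p k • Θi k + (C + ∑ i ∈ s, p i • Θi i)) :=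
      h.1.smul_add (by rw [map_add, degree_sum_smul _ _ _ hΘi, ← hp]; ring)
    have hmid : C + p k • Δi k + ∑ i ∈ s, p i • Θi i
        = p k • Δi k + (C + ∑ i ∈ s, p i • Θi i) := by abel
    rw [← add_assoc, add_left_comm]
    exact hrest.trans (hmid ▸ hfirst)

lemma MStep.sum_smul (hm : MassPreserving step) {ι : Type*} (s : Finset ι)
    (p : ι → NNReal) (Δi Θi : ι → PDist α) (hp : ∑ i ∈ s, p i = 1)
    (hΔi : ∀ i ∈ s, degree (Δi i) = 1) (h : ∀ i ∈ s, MStep step (Δi i) (Θi i)) :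
    MStep step (∑ i ∈ s, p i • Δi i) (∑ i ∈ s, p i • Θi i) := by
  simpa using MStep.add_sum_smul hm s p Δi Θi 0 (by simpa using hp) hΔi h

lemma DStep.delta_smul_sum {ι : Type*} (s : Finset ι) (q : ι → NNReal) (θ : ι → PDist α)
    {a : α} (hq : ∑ j ∈ s, q j ≠ 0) (hstep : ∀ j ∈ s, step a (θ j) ∨ θ j = delta a)
    (hex : ∃ j ∈ s, step a (θ j)) :
    DStep step (delta a) ((∑ j ∈ s, q j)⁻¹ • ∑ j ∈ s, q j • θ j) := by
  obtain ⟨j, hj, hs⟩ := hex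
  have hnorm : ∑ j : s, (∑ j ∈ s, q j)⁻¹ * q j = 1 := by
    rw [Finset.sum_coe_sort s fun j => (∑ j ∈ s, q j)⁻¹ * q j, ← Finset.mul_sum,
      inv_mul_cancel₀ hq]
  refine DStep.of_fintype (fun j : s => (∑ j ∈ s, q j)⁻¹ * q j) (fun _ => a) (fun j => θ j)
    hnorm ?_ (fun j => hstep j j.2) ⟨⟨j, hj⟩, hs⟩ ?_
  · rw [← Finset.sum_smul, hnorm, one_smul]
  · rw [Finset.smul_sum, ← Finset.sum_coe_sort s fun j => (∑ j ∈ s, q j)⁻¹ • (q j • θ j)]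
    simp only [smul_smul]

open Classical in
noncomputable def averageReduct (step : α → PDist α → Prop) {ι : Type*} (s : Finset ι)
    (q : ι → NNReal) (θ : ι → PDist α) (a : α) : PDist α :=
  if ∑ j ∈ s, q j ≠ 0 ∧ ∃ j ∈ s, step a (θ j) then (∑ j ∈ s, q j)⁻¹ • ∑ j ∈ s, q j • θ j
  else delta a

section averageReduct

variable {ι : Type*} {s : Finset ι} {q : ι → NNReal} {θ : ι → PDist α} {a : α}

lemma mstep_averageReduct (hstep : ∀ j ∈ s, step a (θ j) ∨ θ j = delta a) :
    MStep step (delta a) (averageReduct step s q θ a) := by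
  unfold averageReduct
  split_ifs with hmove
  · exact .single (DStep.delta_smul_sum s q θ hmove.1 hstep hmove.2)
  · exact .refl

lemma sum_smul_averageReduct (hstep : ∀ j ∈ s, step a (θ j) ∨ θ j = delta a) :
    (∑ j ∈ s, q j) • averageReduct step s q θ a = ∑ j ∈ s, q j • θ j := by
  unfold averageReduct
  split_ifs with hmove
  · rw [smul_smul, mul_inv_cancel₀ hmove.1, one_smul]
  by_cases h0 : ∑ j ∈ s, q j = 0
  · rw [h0, zero_smul]
    rw [Finset.sum_eq_zero_iff] at h0
    exact (Finset.sum_eq_zero fun j hj => by rw [h0 j hj, zero_smul]).symm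
  · rw [Finset.sum_smul]
    refine Finset.sum_congr rfl fun j hj => ?_
    rcases hstep j hj with hs | hs
    · exact absurd ⟨h0, j, hj, hs⟩ hmove
    · rw [hs]

end averageReduct

lemma DStep.exists_eq_linearCombination (hm : MassPreserving step) {Δ Θ : PDist α}
    (h : DStep step Δ Θ) :
    ∃ Θf : α → PDist α, (∀ a, MStep step (delta a) (Θf a)) ∧ (∀ a, degree (Θf a) = 1) ∧
      Θ = linearCombination NNReal Θf Δ := by
  classical
  obtain ⟨m, q, P, θ, -, rfl, hstep, -, rfl⟩ := h
  let J : α → Finset (Fin m) := fun a => {j | P j = a}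
  have hP : ∀ a, ∀ j ∈ J a, P j = a := fun a j hj => (Finset.mem_filter.mp hj).2
  have hstepJ : ∀ a, ∀ j ∈ J a, step a (θ j) ∨ θ j = delta a := fun a j hj => by
    simpa only [hP a j hj] using hstep j
  let Θf := fun a => averageReduct step (J a) q θ a
  have hreach : ∀ a, MStep step (delta a) (Θf a) := fun a => mstep_averageReduct (hstepJ a)
  refine ⟨Θf, hreach, fun a => (hreach a).degree_eq_one hm (degree_delta a), ?_⟩
  have hmaps : ∀ j ∈ (Finset.univ : Finset (Fin m)), P j ∈ Finset.univ.image P :=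
    fun j _ => Finset.mem_image_of_mem P (Finset.mem_univ j)
  rw [map_sum, ← Finset.sum_fiberwise_of_maps_to hmaps, ← Finset.sum_fiberwise_of_maps_to hmaps]
  simp only [map_smul, delta, linearCombination_single, one_smul]
  refine Finset.sum_congr rfl fun a _ => ?_
  rw [← sum_smul_averageReduct (hstepJ a), Finset.sum_smul]
  exact Finset.sum_congr rfl fun j hj => by rw [hP a j hj]

lemma DStep.exists_sum_smul (hm : MassPreserving step) {Δ Θ : PDist α} (h : DStep step Δ Θ)
    {ι : Type*} [Fintype ι] (p : ι → NNReal) (Δi : ι → PDist α)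
    (hΔ : Δ = ∑ i, p i • Δi i) (hΔi : ∀ i, degree (Δi i) = 1) :
    ∃ Θi : ι → PDist α, (∀ i, MStep step (Δi i) (Θi i)) ∧ (∀ i, degree (Θi i) = 1) ∧
      Θ = ∑ i, p i • Θi i := by
  obtain ⟨Θf, hstep, hΘf, rfl⟩ := h.exists_eq_linearCombination hm
  refine ⟨fun i => linearCombination NNReal Θf (Δi i), fun i => ?_,
    fun i => (degree_linearCombination hΘf _).trans (hΔi i), by simp [hΔ, map_sum]⟩
  have hsum : ∑ a ∈ (Δi i).support, Δi i a = 1 := (degree_apply _).symm.trans (hΔi i)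
  have := MStep.sum_smul hm _ _ _ Θf hsum (fun a _ => degree_delta a) fun a _ => hstep a
  rwa [sum_support_smul_delta] at this

lemma MStep.exists_sum_smul (hm : MassPreserving step) {Δ Θ : PDist α} (h : MStep step Δ Θ)
    {ι : Type*} [Fintype ι] (p : ι → NNReal) (Δi : ι → PDist α)
    (hΔ : Δ = ∑ i, p i • Δi i) (hΔi : ∀ i, degree (Δi i) = 1) :
    ∃ Θi : ι → PDist α, (∀ i, MStep step (Δi i) (Θi i)) ∧ (∀ i, degree (Θi i) = 1) ∧
      Θ = ∑ i, p i • Θi i := by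
  induction h with
  | refl => exact ⟨Δi, fun _ => .refl, hΔi, hΔ⟩
  | tail _ hd ih =>
    obtain ⟨Γi, hΓ, hΓi, hsum⟩ := ih
    obtain ⟨Θi, hΘ, hΘi, rfl⟩ := hd.exists_sum_smul hm p Γi hsum hΓi
    exact ⟨Θi, fun i => (hΓ i).trans (hΘ i), hΘi, rfl⟩

lemma Lift.exists_mstep (hm : MassPreserving step)
    (hsim : ∀ P Q, R P Q → ∀ Δ, MStep step (delta P) Δ →
      ∃ Θ, MStep step (delta Q) Θ ∧ Lift R Δ Θ)
    {Δ Θ Δ' : PDist α} (hΔΘ : Lift R Δ Θ) (h : MStep step Δ Δ') :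
    ∃ Θ', MStep step Θ Θ' ∧ Lift R Δ' Θ' := by
  obtain ⟨n, p, P, Q, hp, rfl, rfl, hR⟩ := hΔΘ
  obtain ⟨Δi, hPΔ, -, rfl⟩ := h.exists_sum_smul hm p _ rfl fun i => degree_delta (P i)
  choose Θi hQΘ hlift using fun i => hsim _ _ (hR i) _ (hPΔ i)
  exact ⟨_, MStep.sum_smul hm _ p _ Θi hp (fun i _ => degree_delta (Q i)) fun i _ => hQΘ i,
    Lift.sum_smul p _ _ hp hlift⟩

theorem lift_pbisim_general {α : Type} (step : α → PDist α → Prop) (R : α → α → Prop)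
    (hrefl : Reflexive R)
    (hbis : PBisim step R) : DBisim step (Lift R) := by
  have hm := hbis.massPreserving hrefl
  refine fun Δ Θ h => ⟨fun Δ' hΔ' => h.exists_mstep hm (fun P Q hPQ => (hbis P Q hPQ).1) hΔ',
    fun Θ' hΘ' => ?_⟩
  have hsim : ∀ Q P, flip R Q P → ∀ Θ', MStep step (delta Q) Θ' →
      ∃ Δ', MStep step (delta P) Δ' ∧ Lift (flip R) Θ' Δ' := fun Q P hPQ Θ' hΘ' =>
    ((hbis P Q hPQ).2 Θ' hΘ').imp fun _ ⟨hP, hlift⟩ => ⟨hP, hlift.flip⟩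
  obtain ⟨Δ', hΔ', hlift⟩ := h.flip.exists_mstep hm hsim hΘ'
  exact ⟨Δ', hΔ', hlift.flip⟩

/-- If a preorder `R` on processes is a probabilistic bisimulation, then its
lifting `R̂` to distributions is a probabilistic bisimulation on distributions. -/
theorem lift_pbisim {α : Type} (step : α → PDist α → Prop) (R : α → α → Prop)
    (hrefl : Reflexive R) (htrans : Transitive R)
    (hbis : PBisim step R) : DBisim step (Lift R) :=
  lift_pbisim_general step R hrefl hbis
end
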